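/- Two partial expressions e and e' are n-extensionally equivalent if and only if ⟦e t1…tn⟧ = ⟦e' t1…tn⟧ for all partial patterns t1,…,tn; i.e. it suffices to test n-extensional equivalence on partial-pattern arguments. -/

import Mathlib

/-- A signature: function symbols and constructor symbols, each with an arity. -/
structure Sig where
  FS : Type
  CS : Type
  arityF : FS → ℕ
  arityC : CS → ℕ

/-- Applicative partial expressions over a signature.  Variables are natural
numbers and `bot` is the distinguished 0-ary constructor `⊥`. -/
inductive Exp (σ : Sig) : Type where
  | var : ℕ → Exp σ
  | fn : σ.FS → Exp σ
  | cn : σ.CS → Exp σ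
  | bot : Exp σ
  | app : Exp σ → Exp σ → Exp σ

variable {σ : Sig}

/-- `applyList e [e1, …, en]` is the curried application `e e1 … en`. -/
def applyList (e : Exp σ) (es : List (Exp σ)) : Exp σ := es.foldl Exp.app e

/-- Partial patterns `Pat_⊥`. -/
inductive IsPPat : Exp σ → Prop where
  | var (x : ℕ) : IsPPat (Exp.var x)
  | bot : IsPPat (Exp.bot : Exp σ)
  | capp (c : σ.CS) (ts : List (Exp σ)) (har : ts.length ≤ σ.arityC c)
      (hts : ∀ t ∈ ts, IsPPat t) : IsPPat (applyList (Exp.cn c) ts)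
  | fapp (f : σ.FS) (ts : List (Exp σ)) (har : ts.length < σ.arityF f)
      (hts : ∀ t ∈ ts, IsPPat t) : IsPPat (applyList (Exp.fn f) ts)

/-- The constructor `⊥` does not occur in the expression. -/
def BotFree : Exp σ → Prop
  | .bot => False
  | .app a b => BotFree a ∧ BotFree b
  | _ => True

/-- Total patterns `Pat`. -/
def IsPat (t : Exp σ) : Prop := IsPPat t ∧ BotFree t

/-- First-order patterns `FOPat`. -/
inductive IsFOPat : Exp σ → Prop where
  | var (x : ℕ) : IsFOPat (Exp.var x)
  | capp (c : σ.CS) (ts : List (Exp σ)) (har : ts.length = σ.arityC c)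
      (hts : ∀ t ∈ ts, IsFOPat t) : IsFOPat (applyList (Exp.cn c) ts)

/-- The list of occurrences of variables in an expression. -/
def occVars : Exp σ → List ℕ
  | .var x => [x]
  | .app a b => occVars a ++ occVars b
  | _ => []

/-- Applying a substitution to an expression. -/
def subst (θ : ℕ → Exp σ) : Exp σ → Exp σ
  | .var x => θ x
  | .fn f => .fn f
  | .cn c => .cn c
  | .bot => .bot
  | .app a b => .app (subst θ a) (subst θ b)

/-- Partial-pattern substitutions `PSubst_⊥`. -/
def PSub (θ : ℕ → Exp σ) : Prop := ∀ x, IsPPat (θ x)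

/-- A program rule `f t1 … tn → r` (the left-hand side is `f` applied to `lhs`). -/
structure Rule (σ : Sig) where
  fn : σ.FS
  lhs : List (Exp σ)
  rhs : Exp σ

/-- Well-formedness of a rule: `f` is applied to as many arguments as its arity,
the arguments form a linear tuple of total patterns. -/
def Rule.WF (r : Rule σ) : Prop :=
  r.lhs.length = σ.arityF r.fn ∧ (∀ t ∈ r.lhs, IsPat t) ∧
    (r.lhs.flatMap occVars).Nodup

/-- The rule has no extra variables: all variables of the right-hand side occur
in the left-hand side. -/
def Rule.NoExtra (r : Rule σ) : Prop :=
  ∀ x ∈ occVars r.rhs, x ∈ r.lhs.flatMap occVars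

abbrev Program (σ : Sig) := Set (Rule σ)

/-- A program without extra variables, all whose rules are well formed. -/
def WFProg (P : Program σ) : Prop := ∀ r ∈ P, r.WF ∧ r.NoExtra

/-- `h ∈ Σ` (a function symbol, a constructor symbol, or `⊥`). -/
def IsSymb : Exp σ → Prop
  | .fn _ => True
  | .cn _ => True
  | .bot => True
  | _ => False

/-- HOCRWL derivation trees for statements `e ⇒ t`, with rules
(B), (RR), (DC) and (OR). -/
inductive DTree (P : Program σ) : Exp σ → Exp σ → Type where
  | bot (e : Exp σ) : DTree P e Exp.bot
  | rr (x : ℕ) : DTree P (Exp.var x) (Exp.var x)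
  | dc (h : Exp σ) (es ts : List (Exp σ)) (hsym : IsSymb h)
      (hlen : es.length = ts.length) (hpat : IsPPat (applyList h ts))
      (ds : ∀ p ∈ es.zip ts, DTree P p.1 p.2) :
      DTree P (applyList h es) (applyList h ts)
  | opr (r : Rule σ) (hr : r ∈ P) (θ : ℕ → Exp σ) (hθ : PSub θ)
      (es as : List (Exp σ)) (t : Exp σ) (hlen : es.length = r.lhs.length)
      (ds : ∀ p ∈ es.zip (r.lhs.map (subst θ)), DTree P p.1 p.2)
      (d : DTree P (applyList (subst θ r.rhs) as) t) :
      DTree P (applyList (Exp.fn r.fn) (es ++ as)) t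

/-- `P ⊢ e ⇒ t` is derivable in the HOCRWL proof calculus. -/
def Deriv (P : Program σ) (e t : Exp σ) : Prop := Nonempty (DTree P e t)

/-- The HOCRWL denotation `⟦e⟧^P = { t ∈ Pat_⊥ | P ⊢ e ⇒ t }`. -/
def den (P : Program σ) (e : Exp σ) : Set (Exp σ) := {t | IsPPat t ∧ Deriv P e t}

/-- Observations: total patterns in the denotation. -/
def Obs (P : Program σ) (e : Exp σ) : Set (Exp σ) := {t | t ∈ den P e ∧ BotFree t}

/-- First-order observations: first-order patterns in the denotation. -/
def ObsFO (P : Program σ) (e : Exp σ) : Set (Exp σ) := {t | t ∈ den P e ∧ IsFOPat t}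

/-- Contexts `C ::= [ ] | C e | e C`. -/
inductive Cntxt (σ : Sig) : Type where
  | hole : Cntxt σ
  | appL : Cntxt σ → Exp σ → Cntxt σ
  | appR : Exp σ → Cntxt σ → Cntxt σ

/-- Filling the hole of a context with an expression. -/
def Cntxt.fill : Cntxt σ → Exp σ → Exp σ
  | .hole, e => e
  | .appL C e', e => .app (C.fill e) e'
  | .appR e' C, e => .app e' (C.fill e)

/-- Function symbols occurring in an expression. -/
def expFS : Exp σ → Set σ.FS
  | .fn f => {f}
  | .app a b => expFS a ∪ expFS b
  | _ => ∅

/-- Function symbols occurring in a rule. -/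
def ruleFS (r : Rule σ) : Set σ.FS :=
  insert r.fn ((⋃ t ∈ r.lhs, expFS t) ∪ expFS r.rhs)

/-- Function symbols occurring in a program. -/
def progFS (P : Program σ) : Set σ.FS := ⋃ r ∈ P, ruleFS r

/-- Function symbols defined by a program (roots of left-hand sides). -/
def defs (P : Program σ) : Set σ.FS := Rule.fn '' P

/-- `P'` is a safe extension of `(P, e)`: `P' = P ⊎ P''` where `P''` defines no
function symbol occurring in `P` or in `e`. -/
def SafeExt (P P' : Program σ) (e : Exp σ) : Prop :=
  ∃ P'' : Program σ, P' = P ∪ P'' ∧ Disjoint P P'' ∧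
    Disjoint (defs P'') (expFS e ∪ progFS P)

/-- `e ∼ₙ e'` : `n`-extensional equivalence. -/
def ExtEquiv (P : Program σ) (n : ℕ) (e e' : Exp σ) : Prop :=
  ∀ es : List (Exp σ), es.length = n →
    den P (applyList e es) = den P (applyList e' es)

/-!
A derivation of `e e₁ … eₙ ⇒ t` factors through partial patterns: reading off what each
argument `eᵢ` is reduced to (or `⊥` if it is never inspected) gives `eᵢ ⇒ tᵢ` with
`e t₁ … tₙ ⇒ t`. Conversely such a factorization can be reassembled, because `⇒` is
transitive: from a partial pattern, `(OR)` never fires (a partial pattern applies `f` to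
fewer than `ar f` arguments), so a derivation from it only cuts subpatterns down to `⊥`.
Hence `⟦e e₁ … eₙ⟧` is the union of `⟦e t₁ … tₙ⟧` over the partial patterns `tᵢ ∈ ⟦eᵢ⟧`,
and agreement on pattern arguments implies agreement on all arguments.
-/

namespace List

variable {α β γ : Type*} {R : α → β → Prop}

theorem forall₂_append_left_iff {l₁ l₂ : List α} {u : List β} :
    Forall₂ R (l₁ ++ l₂) u ↔ ∃ u₁ u₂, u = u₁ ++ u₂ ∧ Forall₂ R l₁ u₁ ∧ Forall₂ R l₂ u₂ := by
  induction l₁ generalizing u with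
  | nil => simp
  | cons a l₁ ih =>
    simp only [cons_append, forall₂_cons_left_iff, ih]
    constructor
    · rintro ⟨b, _, hab, ⟨u₁, u₂, rfl, h₁, h₂⟩, rfl⟩
      exact ⟨b :: u₁, u₂, rfl, ⟨b, u₁, hab, h₁, rfl⟩, h₂⟩
    · rintro ⟨_, u₂, rfl, ⟨b, u₁, hab, h₁, rfl⟩, h₂⟩
      exact ⟨b, u₁ ++ u₂, hab, ⟨u₁, u₂, rfl, h₁, h₂⟩, rfl⟩

theorem forall₂_append_right_iff {l : List α} {u₁ u₂ : List β} :
    Forall₂ R l (u₁ ++ u₂) ↔ ∃ l₁ l₂, l = l₁ ++ l₂ ∧ Forall₂ R l₁ u₁ ∧ Forall₂ R l₂ u₂ := by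
  constructor
  · intro h
    obtain ⟨l₁, l₂, rfl, h₁, h₂⟩ := forall₂_append_left_iff.1 (Forall₂.flip (R := flip R) h)
    exact ⟨l₁, l₂, rfl, h₁.flip, h₂.flip⟩
  · rintro ⟨l₁, l₂, rfl, h₁, h₂⟩
    exact rel_append h₁ h₂

theorem Forall₂.comp {S : β → γ → Prop} {T : α → γ → Prop}
    (h : ∀ a b c, R a b → S b c → T a c) :
    ∀ {l₁ l₂ l₃}, Forall₂ R l₁ l₂ → Forall₂ S l₂ l₃ → Forall₂ T l₁ l₃
  | _, _, _, .nil, .nil => .nil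
  | _, _, _, .cons hab h₁, .cons hbc h₂ => .cons (h _ _ _ hab hbc) (h₁.comp h h₂)

theorem Forall₂.forall_mem_right {p : β → Prop} (h : ∀ a b, R a b → p b) :
    ∀ {l u}, Forall₂ R l u → ∀ b ∈ u, p b
  | _, _, .nil => by simp
  | _, _, .cons hab hlu => by
    simpa only [forall_mem_cons] using ⟨h _ _ hab, hlu.forall_mem_right h⟩

end List

namespace Exp

def head : Exp σ → Exp σ
  | .app a _ => head a
  | e => e

def args : Exp σ → List (Exp σ)
  | .app a b => args a ++ [b]
  | _ => []

end Exp

@[simp] theorem applyList_nil (e : Exp σ) : applyList e [] = e := rfl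

theorem applyList_append (e : Exp σ) (l₁ l₂ : List (Exp σ)) :
    applyList e (l₁ ++ l₂) = applyList (applyList e l₁) l₂ :=
  List.foldl_append ..

@[simp] theorem head_applyList (e : Exp σ) (l : List (Exp σ)) :
    (applyList e l).head = e.head := by
  induction l generalizing e with
  | nil => rfl
  | cons a l ih => exact (ih (.app e a)).trans rfl

@[simp] theorem args_applyList (e : Exp σ) (l : List (Exp σ)) :
    (applyList e l).args = e.args ++ l := by
  induction l generalizing e with
  | nil => simp
  | cons a l ih => exact (ih (.app e a)).trans (by simp [Exp.args])

theorem applyList_head_args (e : Exp σ) : applyList e.head e.args = e := by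
  induction e with
  | app a b iha _ => rw [Exp.head, Exp.args, applyList_append, iha]; rfl
  | _ => rfl

theorem IsSymb.head_eq {h : Exp σ} (hh : IsSymb h) : h.head = h := by
  cases h <;> simp_all [IsSymb, Exp.head]

theorem IsSymb.args_eq {h : Exp σ} (hh : IsSymb h) : h.args = [] := by
  cases h <;> simp_all [IsSymb, Exp.args]

theorem IsSymb.exists_of_applyList_eq {h e : Exp σ} (hh : IsSymb h) {es l : List (Exp σ)}
    (heq : applyList e es = applyList h l) : ∃ pre, e = applyList h pre ∧ l = pre ++ es := by
  have hhead := congrArg Exp.head heq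
  have hargs := congrArg Exp.args heq
  simp only [head_applyList, args_applyList, hh.head_eq, hh.args_eq, List.nil_append]
    at hhead hargs
  exact ⟨e.args, by rw [← hhead, applyList_head_args], hargs.symm⟩

theorem IsSymb.applyList_inj {h h' : Exp σ} (hh : IsSymb h) (hh' : IsSymb h')
    {l l' : List (Exp σ)} (heq : applyList h l = applyList h' l') : h = h' ∧ l = l' := by
  obtain ⟨pre, rfl, rfl⟩ := hh'.exists_of_applyList_eq heq
  have hpre := hh.args_eq
  simp only [args_applyList, hh'.args_eq, List.nil_append] at hpre
  simp [hpre]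

theorem applyList_eq_var {e : Exp σ} {l : List (Exp σ)} {x : ℕ}
    (heq : applyList e l = .var x) : e = .var x ∧ l = [] := by
  have hargs := congrArg Exp.args heq
  simp only [args_applyList, Exp.args, List.append_eq_nil_iff] at hargs
  rw [hargs.2] at heq
  exact ⟨heq, hargs.2⟩

theorem IsSymb.applyList_ne_var {h : Exp σ} (hh : IsSymb h) (l : List (Exp σ)) (x : ℕ) :
    applyList h l ≠ .var x := fun heq => by
  simp [(applyList_eq_var heq).1, IsSymb] at hh

theorem subst_applyList (θ : ℕ → Exp σ) (e : Exp σ) (l : List (Exp σ)) :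
    subst θ (applyList e l) = applyList (subst θ e) (l.map (subst θ)) := by
  induction l generalizing e with
  | nil => rfl
  | cons a l ih => exact ih (.app e a)

theorem isSymb_fn (f : σ.FS) : IsSymb (Exp.fn f : Exp σ) := trivial

theorem isSymb_cn (c : σ.CS) : IsSymb (Exp.cn c : Exp σ) := trivial

namespace IsPPat

theorem forall_mem_of_applyList {h : Exp σ} {ts : List (Exp σ)} (hh : IsSymb h)
    (hp : IsPPat (applyList h ts)) : ∀ t ∈ ts, IsPPat t := by
  generalize hE : applyList h ts = E at hp
  cases hp with
  | var x => exact absurd hE (hh.applyList_ne_var ts x)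
  | bot => simp [(hh.applyList_inj (h' := .bot) (l' := []) trivial hE).2]
  | capp c ts' _ hts => rwa [(hh.applyList_inj (isSymb_cn c) hE).2]
  | fapp f ts' _ hts => rwa [(hh.applyList_inj (isSymb_fn f) hE).2]

theorem length_lt_arityF {f : σ.FS} {ts : List (Exp σ)}
    (hp : IsPPat (applyList (.fn f) ts)) : ts.length < σ.arityF f := by
  generalize hE : applyList (.fn f) ts = E at hp
  cases hp with
  | var x => exact absurd hE ((isSymb_fn f).applyList_ne_var ts x)
  | bot => cases ((isSymb_fn f).applyList_inj (h' := .bot) (l' := []) trivial hE).1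
  | capp c ts' _ _ => cases ((isSymb_fn f).applyList_inj (isSymb_cn c) hE).1
  | fapp f' ts' har _ =>
    obtain ⟨hf, rfl⟩ := (isSymb_fn f).applyList_inj (isSymb_fn f') hE
    cases hf
    exact har

theorem subst {θ : ℕ → Exp σ} (hθ : PSub θ) {t : Exp σ} (ht : IsPPat t) :
    IsPPat (subst θ t) := by
  induction ht with
  | var x => exact hθ x
  | bot => exact .bot
  | capp c ts har _ ih =>
    rw [subst_applyList]
    exact .capp c _ (by simpa using har) (by simpa using ih)
  | fapp f ts har _ ih =>
    rw [subst_applyList]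
    exact .fapp f _ (by simpa using har) (by simpa using ih)

end IsPPat

theorem WFProg.isPPat_lhs_subst {P : Program σ} (hP : WFProg P) {r : Rule σ} (hr : r ∈ P)
    {θ : ℕ → Exp σ} (hθ : PSub θ) : ∀ t ∈ r.lhs.map (subst θ), IsPPat t := by
  simp only [List.mem_map, forall_exists_index, and_imp, forall_apply_eq_imp_iff₂]
  exact fun t ht => ((hP r hr).1.2.1 t ht).1.subst hθ

open List (Forall₂)

namespace Deriv

variable {P : Program σ}

theorem bot (e : Exp σ) : Deriv P e .bot := ⟨.bot e⟩

theorem rr (x : ℕ) : Deriv P (.var x) (.var x) := ⟨.rr x⟩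

theorem dc {h : Exp σ} {es ts : List (Exp σ)} (hh : IsSymb h) (hpat : IsPPat (applyList h ts))
    (hargs : Forall₂ (Deriv P) es ts) : Deriv P (applyList h es) (applyList h ts) :=
  ⟨.dc h es ts hh hargs.length_eq hpat fun _ hp => (List.forall₂_zip hargs hp).some⟩

theorem opr {r : Rule σ} (hr : r ∈ P) {θ : ℕ → Exp σ} (hθ : PSub θ) {es as : List (Exp σ)}
    {t : Exp σ} (hlhs : Forall₂ (Deriv P) es (r.lhs.map (subst θ)))
    (hrhs : Deriv P (applyList (subst θ r.rhs) as) t) :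
    Deriv P (applyList (.fn r.fn) (es ++ as)) t :=
  ⟨.opr r hr θ hθ es as t (by simpa using hlhs.length_eq)
    (fun _ hp => (List.forall₂_zip hlhs hp).some) hrhs.some⟩

@[elab_as_elim]
theorem induction_on {motive : Exp σ → Exp σ → Prop}
    (bot : ∀ e, motive e .bot)
    (rr : ∀ x, motive (.var x) (.var x))
    (dc : ∀ h es ts, IsSymb h → IsPPat (applyList h ts) →
      Forall₂ (fun e t => Deriv P e t ∧ motive e t) es ts →
      motive (applyList h es) (applyList h ts))
    (opr : ∀ r θ es as t, r ∈ P → PSub θ →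
      Forall₂ (fun e t => Deriv P e t ∧ motive e t) es (r.lhs.map (subst θ)) →
      Deriv P (applyList (subst θ r.rhs) as) t → motive (applyList (subst θ r.rhs) as) t →
      motive (applyList (.fn r.fn) (es ++ as)) t)
    {e t : Exp σ} (d : Deriv P e t) : motive e t := by
  obtain ⟨d⟩ := d
  induction d with
  | bot e => exact bot e
  | rr x => exact rr x
  | dc h es ts hh hlen hpat ds ih =>
    exact dc h es ts hh hpat (List.forall₂_iff_zip.2 ⟨hlen, fun hp => ⟨⟨ds _ hp⟩, ih _ hp⟩⟩)
  | opr r hr θ hθ es as t hlen ds d ihds ihd =>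
    refine opr r θ es as t hr hθ ?_ ⟨d⟩ ihd
    exact List.forall₂_iff_zip.2 ⟨by simpa using hlen, fun hp => ⟨⟨ds _ hp⟩, ihds _ hp⟩⟩

theorem isPPat {e t : Exp σ} (d : Deriv P e t) : IsPPat t := by
  refine induction_on (fun _ => .bot) .var ?_ ?_ d
  · exact fun _ _ _ _ hpat _ => hpat
  · exact fun _ _ _ _ _ _ _ _ _ ih => ih

theorem refl {t : Exp σ} (ht : IsPPat t) : Deriv P t t := by
  induction ht with
  | var x => exact rr x
  | bot => exact bot _
  | capp c ts har hts ih =>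
    exact dc (isSymb_cn c) (.capp c ts har hts) (List.forall₂_same.2 ih)
  | fapp f ts har hts ih =>
    exact dc (isSymb_fn f) (.fapp f ts har hts) (List.forall₂_same.2 ih)

theorem eq_bot_or_of_applyList_symb (hP : WFProg P) {h : Exp σ} {ts : List (Exp σ)}
    (hh : IsSymb h) (hpat : IsPPat (applyList h ts)) {s : Exp σ}
    (d : Deriv P (applyList h ts) s) :
    s = .bot ∨ ∃ ss, s = applyList h ss ∧ Forall₂ (Deriv P) ts ss := by
  refine induction_on (motive := fun E s => E = applyList h ts →
    s = .bot ∨ ∃ ss, s = applyList h ss ∧ Forall₂ (Deriv P) ts ss) ?_ ?_ ?_ ?_ d rfl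
  · exact fun _ _ => .inl rfl
  · exact fun x hE => absurd hE.symm (hh.applyList_ne_var ts x)
  · intro h' es ts' hh' _ hargs hE
    obtain ⟨rfl, rfl⟩ := hh'.applyList_inj hh hE
    exact .inr ⟨ts', rfl, hargs.imp fun _ _ => And.left⟩
  · intro r θ es as t hr _ hlhs _ _ hE
    obtain ⟨rfl, rfl⟩ := (isSymb_fn r.fn).applyList_inj hh hE
    have := hpat.length_lt_arityF
    simp [hlhs.length_eq, (hP r hr).1.1] at this

theorem trans (hP : WFProg P) {a t s : Exp σ} (hat : Deriv P a t) (hts : Deriv P t s) :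
    Deriv P a s := by
  refine induction_on (motive := fun a t => ∀ s, Deriv P t s → Deriv P a s)
    ?_ ?_ ?_ ?_ hat s hts
  · intro e s hs
    rcases eq_bot_or_of_applyList_symb hP (h := .bot) (ts := []) trivial .bot hs
      with rfl | ⟨ss, rfl, hss⟩
    · exact bot e
    · rw [List.forall₂_nil_left_iff.1 hss]
      exact bot e
  · exact fun _ _ => id
  · intro h es ts hh hpat hargs s hs
    rcases eq_bot_or_of_applyList_symb hP hh hpat hs with rfl | ⟨ss, rfl, hss⟩
    · exact bot _
    · exact dc hh hs.isPPat (hargs.comp (fun _ _ _ h₁ h₂ => h₁.2 _ h₂) hss)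
  · intro r θ es as t hr hθ hlhs _ ih s hs
    exact opr hr hθ (hlhs.imp fun _ _ => And.left) (ih s hs)

theorem exists_forall₂_of_applyList (hP : WFProg P) {e t : Exp σ} {es : List (Exp σ)}
    (d : Deriv P (applyList e es) t) :
    ∃ ts, Forall₂ (Deriv P) es ts ∧ Deriv P (applyList e ts) t := by
  refine induction_on (motive := fun E t => ∀ e es, E = applyList e es →
    ∃ ts, Forall₂ (Deriv P) es ts ∧ Deriv P (applyList e ts) t) ?_ ?_ ?_ ?_ d e es rfl
  · intro _ _ es _
    exact ⟨es.map fun _ => .bot,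
      List.forall₂_map_right_iff.2 (List.forall₂_same.2 fun _ _ => bot _), bot _⟩
  · intro x _ _ hE
    obtain ⟨rfl, rfl⟩ := applyList_eq_var hE.symm
    exact ⟨[], .nil, rr x⟩
  · intro h _ _ hh hpat hargs _ _ hE
    obtain ⟨pre, rfl, rfl⟩ := hh.exists_of_applyList_eq hE.symm
    obtain ⟨tp, ts, rfl, hpre, hes⟩ := List.forall₂_append_left_iff.1 hargs
    refine ⟨ts, hes.imp fun _ _ => And.left, ?_⟩
    rw [← applyList_append]
    refine dc hh hpat (List.rel_append (hpre.imp fun _ _ => And.left) ?_)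
    exact List.forall₂_same.2 fun t ht =>
      refl (hpat.forall_mem_of_applyList hh t (List.mem_append_right _ ht))
  · intro r θ _ _ t hr hθ hlhs _ ih _ _ hE
    obtain ⟨pre, rfl, hsplit⟩ := (isSymb_fn r.fn).exists_of_applyList_eq hE.symm
    rcases List.append_eq_append_iff.1 hsplit.symm with ⟨mid, rfl, rfl⟩ | ⟨mid, rfl, rfl⟩
    · obtain ⟨lp, lm, hl, hpre, hmid⟩ := List.forall₂_append_left_iff.1 hlhs
      obtain ⟨tas, has, hrhs⟩ := ih _ _ rfl
      refine ⟨lm ++ tas, List.rel_append (hmid.imp fun _ _ => And.left) has, ?_⟩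
      rw [← applyList_append, ← List.append_assoc]
      refine opr hr hθ ?_ hrhs
      rw [hl]
      refine List.rel_append (hpre.imp fun _ _ => And.left) (List.forall₂_same.2 fun t ht => ?_)
      exact refl (hP.isPPat_lhs_subst hr hθ t (hl ▸ List.mem_append_right _ ht))
    · obtain ⟨ts, hes, hrhs⟩ := ih _ _ (applyList_append _ mid _)
      refine ⟨ts, hes, ?_⟩
      rw [← applyList_append, List.append_assoc]
      exact opr hr hθ (hlhs.imp fun _ _ => And.left) (by rwa [applyList_append])

theorem applyList_of_forall₂ (hP : WFProg P) {e t : Exp σ} {es ts : List (Exp σ)}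
    (hes : Forall₂ (Deriv P) es ts) (d : Deriv P (applyList e ts) t) :
    Deriv P (applyList e es) t := by
  refine induction_on (motive := fun E t => ∀ e ts es, E = applyList e ts →
    Forall₂ (Deriv P) es ts → Deriv P (applyList e es) t) ?_ ?_ ?_ ?_ d e ts es rfl hes
  · exact fun _ _ _ _ _ _ => bot _
  · intro x _ _ _ hE hes
    obtain ⟨rfl, rfl⟩ := applyList_eq_var hE.symm
    rw [List.forall₂_nil_right_iff.1 hes]
    exact rr x
  · intro h _ _ hh hpat hargs _ _ _ hE hes
    obtain ⟨pre, rfl, rfl⟩ := hh.exists_of_applyList_eq hE.symm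
    obtain ⟨vp, vs, rfl, hpre, hts⟩ := List.forall₂_append_left_iff.1 hargs
    rw [← applyList_append]
    exact dc hh hpat (List.rel_append (hpre.imp fun _ _ => And.left)
      (hes.comp (fun _ _ _ h₁ h₂ => h₁.trans hP h₂.1) hts))
  · intro r θ _ _ t hr hθ hlhs _ ih _ _ _ hE hes
    obtain ⟨pre, rfl, hsplit⟩ := (isSymb_fn r.fn).exists_of_applyList_eq hE.symm
    rcases List.append_eq_append_iff.1 hsplit.symm with ⟨mid, rfl, rfl⟩ | ⟨mid, rfl, rfl⟩
    · obtain ⟨em, eas, rfl, hem, heas⟩ := List.forall₂_append_right_iff.1 hes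
      obtain ⟨lp, lm, hl, hpre, hmid⟩ := List.forall₂_append_left_iff.1 hlhs
      rw [← applyList_append, ← List.append_assoc]
      refine opr hr hθ ?_ (ih _ _ _ rfl heas)
      rw [hl]
      exact List.rel_append (hpre.imp fun _ _ => And.left)
        (hem.comp (fun _ _ _ h₁ h₂ => h₁.trans hP h₂.1) hmid)
    · rw [← applyList_append, List.append_assoc]
      refine opr hr hθ (hlhs.imp fun _ _ => And.left) ?_
      rw [applyList_append]
      exact ih _ _ _ (applyList_append _ mid _) hes

theorem applyList_iff (hP : WFProg P) {e t : Exp σ} {es : List (Exp σ)} :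
    Deriv P (applyList e es) t ↔ ∃ ts, Forall₂ (Deriv P) es ts ∧ Deriv P (applyList e ts) t :=
  ⟨exists_forall₂_of_applyList hP, fun ⟨_, hes, d⟩ => applyList_of_forall₂ hP hes d⟩

end Deriv

theorem den_applyList {P : Program σ} (hP : WFProg P) (e : Exp σ) (es : List (Exp σ)) :
    den P (applyList e es) = ⋃ (ts) (_ : Forall₂ (Deriv P) es ts), den P (applyList e ts) := by
  ext t
  simp only [Set.mem_iUnion, exists_prop]
  exact ⟨fun ⟨ht, d⟩ => ((Deriv.applyList_iff hP).1 d).imp fun _ ⟨hes, d⟩ => ⟨hes, ht, d⟩,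
    fun ⟨_, hes, ht, d⟩ => ⟨ht, (Deriv.applyList_iff hP).2 ⟨_, hes, d⟩⟩⟩

/-- **Proposition 1(ii)**: `e ∼ₙ e'` iff `⟦e t1…tn⟧ = ⟦e' t1…tn⟧` for all
partial patterns `t1, …, tn`. -/
theorem extEquiv_iff_on_patterns (σ : Sig) (P : Program σ) (hP : WFProg P)
    (e e' : Exp σ) (n : ℕ) :
    ExtEquiv P n e e' ↔
      ∀ ts : List (Exp σ), ts.length = n → (∀ t ∈ ts, IsPPat t) →
        den P (applyList e ts) = den P (applyList e' ts) := by
  refine ⟨fun H ts hts _ => H ts hts, fun H es hes => ?_⟩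
  rw [den_applyList hP, den_applyList hP]
  refine Set.iUnion₂_congr fun ts hts => H ts (hts.length_eq ▸ hes) ?_
  exact hts.forall_mem_right fun _ _ d => d.isPPat
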